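/- If m ≤ e, then any two lines L, L' of the linearized Wenger graph L_m(q) are at distance at most 2(m+1): there is a walk of length at most 2(m+1) between them. -/

import Mathlib

/-- In the linearized Wenger graph, point `P` is adjacent to line `L` iff
`l_k + p_k = p_1^{p^{k-2}} l_1` for `2 ≤ k ≤ m+1`. -/
def lwAdj (p : ℕ) {F : Type} [Field F] {m : ℕ} (P L : Fin (m + 1) → F) : Prop :=
  ∀ k : Fin m, L k.succ + P k.succ = P 0 ^ p ^ (k : ℕ) * L 0

/-- The linearized Wenger graph `L_m(q)` as a bipartite graph on points ⊕ lines. -/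
def lwGraph (p : ℕ) (F : Type) [Field F] (m : ℕ) :
    SimpleGraph ((Fin (m + 1) → F) ⊕ (Fin (m + 1) → F)) :=
  SimpleGraph.fromRel fun v w => match v, w with
    | Sum.inl P, Sum.inr L => lwAdj p P L
    | _, _ => False


/-!
Adding `c • (1, x, x^p, …, x^{p^{m-1}})` to a line is a walk of length two: both lines are
adjacent to the point `(x, x^{p^k} l₁ - l_{k+1})_k`. These vectors span `F_q^{m+1}`, since a
linear form killing all of them is a polynomial `a₀ + ∑ aₖ X^{p^{k-1}}` of degree `< q` vanishing
on `F_q`. Hence `L' - L` is a combination of `m + 1` of them, i.e. a walk of length `2(m + 1)`.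
-/

open Polynomial Cardinal Module Function

theorem span_range_pow_eq_top {F ι : Type*} [Field F] [Fintype ι] {d : ι → ℕ}
    (hd : Injective d) (hdF : ∀ i, (d i : Cardinal) < #F) :
    Submodule.span F (Set.range fun (x : F) (i : ι) => x ^ d i) = ⊤ := by
  classical
  by_contra hne
  obtain ⟨f, hf0, hf⟩ := Submodule.exists_dual_map_eq_bot_of_lt_top (lt_top_iff_ne_top.2 hne)
    inferInstance
  set b := Pi.basisFun F ι
  set Q : F[X] := ∑ i, C (f (b i)) * X ^ d i
  have hQ_eval (x : F) : Q.eval x = 0 := by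
    have hx : f (fun i => x ^ d i) = 0 := by
      rw [← Submodule.mem_bot F, ← hf]
      exact Submodule.mem_map_of_mem (Submodule.subset_span ⟨x, rfl⟩)
    rw [← hx, ← b.sum_repr fun i => x ^ d i]
    simp only [Q, map_sum, map_smul, b, Pi.basisFun_repr, smul_eq_mul, eval_finsetSum, eval_mul,
      eval_C, eval_pow, eval_X]
    exact Finset.sum_congr rfl fun i _ => mul_comm _ _
  have hQ_deg : (Q.natDegree : Cardinal) < #F := by
    have hsup : ((Finset.univ.sup d : ℕ) : Cardinal) < #F :=
      Finset.sup_induction (p := fun n : ℕ => (n : Cardinal) < #F) (by simp [pos_iff_ne_zero])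
        (fun m hm n hn => by rcases max_choice m n with h | h <;> simpa [h]) fun i _ => hdF i
    refine lt_of_le_of_lt (Nat.cast_le.2 ?_) hsup
    exact natDegree_sum_le_of_forall_le _ _ fun i hi =>
      (natDegree_C_mul_X_pow_le _ _).trans (Finset.le_sup hi)
  have hQ_coeff (i : ι) : Q.coeff (d i) = f (b i) := by
    simp [Q, finsetSum_coeff, hd.eq_iff]
  have hQ : Q = 0 := eq_zero_of_forall_eval_zero_of_natDegree_lt_card Q hQ_eval hQ_deg
  exact hf0 (b.ext fun i => by rw [← hQ_coeff, hQ, coeff_zero, LinearMap.zero_apply])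

theorem exists_eq_sum_smul_of_span_range_eq_top {K V α : Type*} [Field K] [AddCommGroup V]
    [Module K V] [FiniteDimensional K V] {v : α → V} (hv : Submodule.span K (Set.range v) = ⊤)
    (y : V) : ∃ (c : Fin (finrank K V) → K) (x : Fin (finrank K V) → α),
      y = ∑ j, c j • v (x j) := by
  let b₀ := Basis.ofSpan hv.ge
  let b := b₀.reindex (b₀.indexEquiv (Module.finBasis K V))
  have hb (j : Fin (finrank K V)) : ∃ a, v a = b j :=
    Basis.ofSpan_subset hv.ge (by simp [b, b₀])
  choose x hx using hb
  exact ⟨b.repr y, x, by simp only [hx, b.sum_repr]⟩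

theorem SimpleGraph.edist_add_sum_le {V M ι : Type*} [AddCommMonoid M] (G : SimpleGraph V)
    (f : M → V) {k : ℕ∞} (s : Finset ι) (g : ι → M)
    (hg : ∀ a, ∀ i ∈ s, G.edist (f a) (f (a + g i)) ≤ k) (a : M) :
    G.edist (f a) (f (a + ∑ i ∈ s, g i)) ≤ s.card * k := by
  classical
  induction s using Finset.induction_on generalizing a with
  | empty => simp
  | insert i s hi ih =>
    calc G.edist (f a) (f (a + ∑ j ∈ insert i s, g j))
        ≤ G.edist (f a) (f (a + g i)) + G.edist (f (a + g i)) (f (a + g i + ∑ j ∈ s, g j)) := by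
          rw [Finset.sum_insert hi, ← add_assoc]; exact G.edist_triangle
      _ ≤ k + s.card * k :=
          add_le_add (hg a i (s.mem_insert_self i))
            (ih (fun b j hj => hg b j (Finset.mem_insert_of_mem hj)) _)
      _ = (insert i s).card * k := by rw [Finset.card_insert_of_notMem hi]; push_cast; ring

section LinearizedWenger

variable {p : ℕ} {F : Type} [Field F] {m : ℕ}

theorem lwGraph_adj_inl_inr (P L : Fin (m + 1) → F) :
    (lwGraph p F m).Adj (Sum.inl P) (Sum.inr L) ↔ lwAdj p P L := by
  simp [lwGraph]

variable (p m) in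
/-- `fun i => x ^ lwExp p m i` is the vector `(1, x, x^p, …, x^{p^{m-1}})`. -/
def lwExp : Fin (m + 1) → ℕ := Fin.cons 0 fun k => p ^ (k : ℕ)

theorem lwExp_injective (hp : 1 < p) : Injective (lwExp p m) := by
  refine Fin.cons_injective_iff.2 ⟨fun ⟨k, hk⟩ => (pow_pos (zero_lt_one.trans hp) _).ne' hk, ?_⟩
  exact (Nat.pow_right_injective hp).comp Fin.val_injective

theorem lwExp_lt_pow (hp : 1 < p) (i : Fin (m + 1)) : lwExp p m i < p ^ m := by
  induction i using Fin.cases with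
  | zero => exact pow_pos (zero_lt_one.trans hp) m
  | succ k => exact Nat.pow_lt_pow_right hp k.isLt

theorem lwGraph_edist_inr_add_smul_le (L : Fin (m + 1) → F) (c x : F) :
    (lwGraph p F m).edist (Sum.inr L) (Sum.inr (L + c • fun i => x ^ lwExp p m i)) ≤ 2 := by
  let P : Fin (m + 1) → F := Fin.cons x fun k => x ^ p ^ (k : ℕ) * L 0 - L k.succ
  have hL : (lwGraph p F m).Adj (Sum.inr L) (Sum.inl P) := by
    refine ((lwGraph_adj_inl_inr P L).2 fun k => ?_).symm
    simp [P]
  have hL' : (lwGraph p F m).Adj (Sum.inl P) (Sum.inr (L + c • fun i => x ^ lwExp p m i)) := by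
    refine (lwGraph_adj_inl_inr _ _).2 fun k => ?_
    simp only [lwExp, Pi.add_apply, Pi.smul_apply, Fin.cons_succ, smul_eq_mul, Fin.cons_zero,
      pow_zero, mul_one, P]
    ring
  exact (SimpleGraph.Walk.cons hL (SimpleGraph.Walk.cons hL' .nil)).edist_le

end LinearizedWenger

theorem natCast_pow_le_mk_galoisField {p : ℕ} [Fact p.Prime] {m e : ℕ} (hme : m ≤ e) :
    ((p ^ m : ℕ) : Cardinal) ≤ #(GaloisField p e) := by
  rcases Nat.eq_zero_or_pos m with rfl | hm
  · simp [Cardinal.one_le_iff_ne_zero]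
  · rw [← Nat.cast_card, GaloisField.card p e (by omega)]
    exact Nat.cast_le.2 (Nat.pow_le_pow_right (Fact.out : p.Prime).pos hme)

theorem stmt17_general (p e m : ℕ) [Fact p.Prime] (hme : m ≤ e)
    (L L' : Fin (m + 1) → GaloisField p e) :
    ∃ w : (lwGraph p (GaloisField p e) m).Walk (Sum.inr L) (Sum.inr L'),
      w.length ≤ 2 * (m + 1) := by
  have hp : 1 < p := (Fact.out : p.Prime).one_lt
  have hspan := span_range_pow_eq_top (lwExp_injective (m := m) hp) fun i =>
    (Nat.cast_lt.2 (lwExp_lt_pow hp i)).trans_le (natCast_pow_le_mk_galoisField hme)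
  obtain ⟨c, x, hcx⟩ := exists_eq_sum_smul_of_span_range_eq_top hspan (L' - L)
  have hdist : (lwGraph p _ m).edist (Sum.inr L) (Sum.inr L') ≤ (2 * (m + 1) : ℕ) := by
    have := (lwGraph p _ m).edist_add_sum_le Sum.inr Finset.univ _
      (fun a j _ => lwGraph_edist_inr_add_smul_le a (c j) (x j)) L
    rw [← hcx, add_sub_cancel, Finset.card_univ, Fintype.card_fin, finrank_fin_fun] at this
    exact this.trans_eq (by push_cast; ring)
  obtain ⟨w, hw⟩ := SimpleGraph.exists_walk_of_edist_ne_top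
    (ne_top_of_le_ne_top (ENat.natCast_ne_top _) hdist)
  exact ⟨w, Nat.cast_le.1 (hw ▸ hdist)⟩

/-- If `m ≤ e`, any two lines of `L_m(q)` are joined by a walk of length at most
`2(m+1)`. -/
theorem stmt17 (p e m : ℕ) [Fact p.Prime] (hm : 1 ≤ m) (hme : m ≤ e)
    (L L' : Fin (m + 1) → GaloisField p e) :
    ∃ w : (lwGraph p (GaloisField p e) m).Walk (Sum.inr L) (Sum.inr L'),
      w.length ≤ 2 * (m + 1) :=
  stmt17_general p e m hme L L'
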